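/- arXiv:2505.00783 — 3 statements merged into one kernel-verified Lean document; each statement's English description precedes it below -/
import Mathlib

section
/- A game G = (A, u) admits a simple token SPI realizable in Δ(A) (correlated token game) if and only if there exists a distribution δ ∈ Δ(A) such that u(δ) ⪰ u(a) for every a ∈ Ā and u(δ) ≻ u(a) for at least one a ∈ Ā. -/
namespace SPIs

/-- `Pareto x y` means `y` is a weak Pareto improvement on `x`, i.e. `y ⪰ x`. -/
def Pareto {n : ℕ} (x y : Fin n → ℝ) : Prop := ∀ i, x i ≤ y i

/-- `StrictPareto x y` means `y` is a strict Pareto improvement on `x`, i.e. `y ≻ x`. -/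
def StrictPareto {n : ℕ} (x y : Fin n → ℝ) : Prop := Pareto x y ∧ ∃ i, x i < y i

/-- An `n`-player normal-form game whose (finite, nonempty) action sets are drawn from the
fixed countably infinite universe `ℕ`. -/
structure Game (n : ℕ) where
  act : Fin n → Finset ℕ
  act_nonempty : ∀ i, (act i).Nonempty
  u : (Fin n → ℕ) → Fin n → ℝ

namespace Game

variable {n : ℕ}

/-- `a` is an outcome (action profile) of `G`. -/
def mem (G : Game n) (a : Fin n → ℕ) : Prop := ∀ i, a i ∈ G.act i

/-- Action `x` of Player `i` is strictly dominated (by some action `x'`) in `G`. -/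
def Dominated (G : Game n) (i : Fin n) (x : ℕ) : Prop :=
  x ∈ G.act i ∧ ∃ x' ∈ G.act i, ∀ a : Fin n → ℕ, G.mem a →
    G.u (Function.update a i x) i < G.u (Function.update a i x') i

/-- `G` contains no strictly dominated actions. -/
def FullyReduced (G : Game n) : Prop := ∀ i x, ¬ G.Dominated i x

/-- `G'` is obtained from `G` by removing a single strictly dominated action. -/
def RemoveStep (G G' : Game n) : Prop :=
  ∃ i x, G.Dominated i x ∧
    G'.act = Function.update G.act i ((G.act i).erase x) ∧ G'.u = G.u

/-- `H` is the reduced game `Ḡ` of `G`: it is obtained from `G` by iteratively removing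
strictly dominated actions and itself has none left. -/
def IsReduction (G H : Game n) : Prop :=
  Relation.ReflTransGen RemoveStep G H ∧ H.FullyReduced

/-- `φ` is a game isomorphism from `G` to `G'`. -/
def Iso (G G' : Game n) (φ : Fin n → ℕ → ℕ) : Prop :=
  (∀ i, Set.BijOn (φ i) (G.act i : Set ℕ) (G'.act i : Set ℕ)) ∧
  ∃ m b : Fin n → ℝ, (∀ i, 0 < m i) ∧
    ∀ a : Fin n → ℕ, G.mem a → ∀ i, G'.u (fun j => φ j (a j)) i = m i * G.u a i + b i

/-- The finite set of all action profiles of `G`. -/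
def outcomes (G : Game n) : Finset (Fin n → ℕ) := Fintype.piFinset G.act

end Game

/-- `p` is a correlated strategy profile (probability distribution over outcomes) of `G`. -/
def IsDistOn {n : ℕ} (G : Game n) (p : (Fin n → ℕ) → ℝ) : Prop :=
  (∀ a, 0 ≤ p a) ∧ (∀ a : Fin n → ℕ, ¬ G.mem a → p a = 0) ∧
    (∑ a ∈ G.outcomes, p a) = 1

/-- The expected utility vector of a correlated strategy profile `p` in `G`. -/
def expU {n : ℕ} (G : Game n) (p : (Fin n → ℕ) → ℝ) : Fin n → ℝ :=
  fun i => ∑ a ∈ G.outcomes, p a * G.u a i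

/-- The point-mass distribution on the outcome `a`. -/
def pointMass {n : ℕ} (a : Fin n → ℕ) : (Fin n → ℕ) → ℝ :=
  fun b => if b = a then 1 else 0


lemma removeStep_act_subset {n : ℕ} {G G' : Game n} (h : Game.RemoveStep G G') :
    ∀ i, G'.act i ⊆ G.act i := by
  obtain ⟨j, x, _, hact, _⟩ := h
  intro i
  rw [hact]
  by_cases hij : i = j
  · subst hij; simp [Function.update]; exact Finset.erase_subset _ _
  · simp [Function.update, hij]

lemma reflTrans_act_subset {n : ℕ} {G H : Game n}
    (h : Relation.ReflTransGen Game.RemoveStep G H) : ∀ i, H.act i ⊆ G.act i := by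
  induction h with
  | refl => intro i; exact subset_rfl
  | tail _ hstep ih => intro i; exact (removeStep_act_subset hstep i).trans (ih i)

/-- `G` admits a simple token SPI realizable in `Δ(A)` (a correlated token
game) iff some correlated strategy profile `δ ∈ Δ(A)` weakly Pareto dominates every outcome of
the reduced game `Ḡ` and strictly Pareto dominates at least one outcome of `Ḡ`. -/
theorem simple_correlated_token_spi_iff {n : ℕ} (G Gb : Game n)
    (hred : Game.IsReduction G Gb) :
    (∃ T Tb : Game n, ∃ Ψ : (Fin n → ℕ) → ((Fin n → ℕ) → ℝ),
        (∀ t, T.mem t → IsDistOn G (Ψ t) ∧ ∀ i, T.u t i = expU G (Ψ t) i) ∧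
        Game.IsReduction T Tb ∧
        (∀ t, Tb.mem t → ∀ a, Gb.mem a → Pareto (G.u a) (T.u t)) ∧
        (∃ a, Gb.mem a ∧ ∀ t, Tb.mem t → StrictPareto (G.u a) (T.u t))) ↔
      (∃ δ : (Fin n → ℕ) → ℝ, IsDistOn G δ ∧
        (∀ a, Gb.mem a → Pareto (G.u a) (expU G δ)) ∧
        (∃ a, Gb.mem a ∧ StrictPareto (G.u a) (expU G δ))) := by
  constructor
  · rintro ⟨T, Tb, Ψ, h1, ⟨hsteps, _⟩, h3, a, ha, h4⟩
    set t : Fin n → ℕ := fun i => (Tb.act_nonempty i).choose with ht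
    have htm : Tb.mem t := fun i => (Tb.act_nonempty i).choose_spec
    have hTt : T.mem t := fun i => reflTrans_act_subset hsteps i (htm i)
    obtain ⟨hdist, hu⟩ := h1 t hTt
    refine ⟨Ψ t, hdist, ?_, a, ha, ?_⟩
    · intro a' ha' i
      have := h3 t htm a' ha' i
      rwa [hu i] at this
    · obtain ⟨hp, i, hi⟩ := h4 t htm
      exact ⟨fun j => (hu j) ▸ hp j, i, (hu i) ▸ hi⟩
  · rintro ⟨δ, hδ, hpar, a, ha, hstr⟩
    refine ⟨⟨fun _ => {0}, fun _ => ⟨0, by simp⟩, fun _ => expU G δ⟩,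
      ⟨fun _ => {0}, fun _ => ⟨0, by simp⟩, fun _ => expU G δ⟩,
      fun _ => δ, ?_, ?_, ?_, ⟨a, ha, ?_⟩⟩
    · exact fun t _ => ⟨hδ, fun i => rfl⟩
    · refine ⟨Relation.ReflTransGen.refl, ?_⟩
      rintro i x ⟨hx, x', hx', hd⟩
      simp only [Finset.mem_singleton] at hx hx'
      subst hx; subst hx'
      have := hd (fun _ => 0) (fun j => by simp [Game.mem])
      exact lt_irrefl _ this
    · exact fun t _ a' ha' => hpar a' ha'
    · exact fun t _ => hstr


end SPIs
end

section
/- With V, R, V*, v_i^min, v_i^max as in the context: if V* = {v*} consists of a single point and v*_i ∈ {v_i^min, v_i^max} for exactly one player i, then a valid utility remapping function ψ : V → R exists if and only if for every v ∈ V with v_i ≠ v*_i there exists ε_v > 0 such that the point obtained from v by increasing its i-th coordinate by ε_v (keeping the other coordinate fixed) lies in R. -/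
namespace SPIs

/-- A valid utility remapping function from the set `V` of payoff vectors into the set `R`
of payoff vectors: it maps `V` into `R`, is weakly Pareto improving on `V`, strictly Pareto
improving somewhere on `V`, and entrywise positive affine on `V`. -/
def ValidRemap {n : ℕ} (V R : Set (Fin n → ℝ)) (ψ : (Fin n → ℝ) → Fin n → ℝ) : Prop :=
  (∀ v ∈ V, ψ v ∈ R) ∧ (∀ v ∈ V, Pareto v (ψ v)) ∧ (∃ v ∈ V, StrictPareto v (ψ v)) ∧
  (∀ i, ∃ m b : ℝ, 0 < m ∧ ∀ v ∈ V, ψ v i = m * v i + b)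

/-- `V = u(Ā)`: the set of payoff vectors of the reduced game. -/
def Vset (G Gb : Game 2) : Set (Fin 2 → ℝ) := G.u '' {a | Gb.mem a}

/-- `R = u(Δ(A))`: the convex hull of the set of payoff vectors of `G`. -/
def Rset (G : Game 2) : Set (Fin 2 → ℝ) := convexHull ℝ (G.u '' {a | G.mem a})

/-- `V*`: the set of points of `V` that cannot be strictly Pareto improved within `R`. -/
def VstarSet (G Gb : Game 2) : Set (Fin 2 → ℝ) :=
  {v ∈ Vset G Gb | ¬ ∃ r ∈ Rset G, StrictPareto v r}

/-!
Every valid remapping fixes `v*`, since `v*` admits no strict Pareto improvement in `R`. For the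
other player `j`, `v*_j` lies strictly between the extreme values of `V`, so a positive affine map
fixing `v*_j` that never decreases `v_j` is the identity; all improvement therefore happens in
coordinate `i`, where `ψ_i v - v_i = (m_i - 1) (v_i - v*_i)` is positive whenever `v_i ≠ v*_i`.
Conversely, as `v*_i` is extremal, `v_i - v*_i` has a constant sign `σ` on `V`, and
`ψ_i v = v_i + c σ (v_i - v*_i)` works for every small `c > 0`: by convexity of `R` it lies on the
segment from `v` to the improvement of `v` that is assumed to exist.
-/
open Function Filter Topology Set

theorem Game.RemoveStep.mem_of_mem {n : ℕ} {G G' : Game n} (h : Game.RemoveStep G G')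
    {a : Fin n → ℕ} (ha : G'.mem a) : G.mem a := by
  obtain ⟨i, x, -, hact, -⟩ := h
  intro j
  have hj := ha j
  rw [hact] at hj
  rcases eq_or_ne j i with rfl | hji
  · exact Finset.mem_of_mem_erase (by simpa using hj)
  · simpa [hji] using hj

theorem Game.mem_of_reflTransGen_removeStep {n : ℕ} {G H : Game n}
    (h : Relation.ReflTransGen Game.RemoveStep G H) {a : Fin n → ℕ} (ha : H.mem a) : G.mem a := by
  induction h with
  | refl => exact ha
  | tail _ hstep ih => exact ih (hstep.mem_of_mem ha)

theorem Vset_subset_Rset {G Gb : Game 2} (hred : Game.IsReduction G Gb) :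
    Vset G Gb ⊆ Rset G :=
  (image_mono fun _ ha => Game.mem_of_reflTransGen_removeStep hred.1 ha).trans
    (subset_convexHull ℝ _)

theorem Vset_finite (G Gb : Game 2) : (Vset G Gb).Finite :=
  (Gb.outcomes.finite_toSet.subset fun _ ha => Fintype.mem_piFinset.2 ha).image G.u

theorem _root_.IsLeast.exists_lt_of_mem_image {α β : Type*} [LinearOrder β] {s : Set α}
    {f : α → β} {m : β} (h : IsLeast (f '' s) m) {x : α} (hx : x ∈ s) (hne : f x ≠ m) :
    ∃ a ∈ s, f a < f x := by
  obtain ⟨a, ha, rfl⟩ := h.1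
  exact ⟨a, ha, (h.2 (mem_image_of_mem f hx)).lt_of_ne' hne⟩

theorem _root_.IsGreatest.exists_gt_of_mem_image {α β : Type*} [LinearOrder β] {s : Set α}
    {f : α → β} {m : β} (h : IsGreatest (f '' s) m) {x : α} (hx : x ∈ s) (hne : f x ≠ m) :
    ∃ a ∈ s, f x < f a := by
  obtain ⟨a, ha, rfl⟩ := h.1
  exact ⟨a, ha, (h.2 (mem_image_of_mem f hx)).lt_of_ne hne⟩

theorem affine_eq_id_of_fixed_of_le {m b a p c : ℝ} (ha : a < p) (hc : p < c)
    (hp : m * p + b = p) (hla : a ≤ m * a + b) (hlc : c ≤ m * c + b) :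
    m = 1 ∧ b = 0 := by
  have hm : m = 1 := by nlinarith
  subst hm
  exact ⟨rfl, by linarith⟩

variable {n : ℕ}

theorem pareto_update_add {v : Fin n → ℝ} {i : Fin n} {d : ℝ} (hd : 0 ≤ d) :
    Pareto v (update v i (v i + d)) := by
  intro k
  rcases eq_or_ne k i with rfl | hk <;> simp [*]

theorem update_add_eq_add_single (v : Fin n → ℝ) (i : Fin n) (d : ℝ) :
    update v i (v i + d) = v + Pi.single i d := by
  ext k
  rcases eq_or_ne k i with rfl | hk <;> simp [*]

theorem _root_.Convex.update_add_mem {R : Set (Fin n → ℝ)} (hR : Convex ℝ R) {v : Fin n → ℝ}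
    (hv : v ∈ R) {i : Fin n} {ε d : ℝ} (hε : update v i (v i + ε) ∈ R) (hd : d ∈ Icc 0 ε) :
    update v i (v i + d) ∈ R := by
  have hS : Convex ℝ {x : ℝ | v + Pi.single i x ∈ R} :=
    (hR.translate_preimage_right v).linear_preimage (LinearMap.single ℝ (fun _ => ℝ) i)
  rw [update_add_eq_add_single] at hε ⊢
  exact hS.ordConnected.out (by simpa using hv) hε hd

theorem lt_of_not_strictPareto {R : Set (Fin 2 → ℝ)} {p w : Fin 2 → ℝ}
    (hp : ¬ ∃ r ∈ R, StrictPareto p r) (hw : w ∈ R) {i j : Fin 2} (hji : j ≠ i)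
    (hwj : p j < w j) : w i < p i := by
  by_contra! hwi
  refine hp ⟨w, hw, fun k => ?_, j, hwj⟩
  rcases eq_or_ne k i with rfl | hki
  · exact hwi
  · obtain rfl : k = j := Fin.ext (by omega)
    exact hwj.le

namespace ValidRemap

variable {V R : Set (Fin n → ℝ)} {ψ : (Fin n → ℝ) → Fin n → ℝ} {p : Fin n → ℝ}

theorem apply_eq_self (hψ : ValidRemap V R ψ) (hpV : p ∈ V)
    (hp : ¬ ∃ r ∈ R, StrictPareto p r) : ψ p = p := by
  by_contra hne
  obtain ⟨k, hk⟩ := Function.ne_iff.1 hne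
  exact hp ⟨ψ p, hψ.1 p hpV, hψ.2.1 p hpV, k, (hψ.2.1 p hpV k).lt_of_ne' hk⟩

theorem apply_eq_of_lt_of_lt (hψ : ValidRemap V R ψ) (hpV : p ∈ V) (hfix : ψ p = p)
    {j : Fin n} {a c : Fin n → ℝ} (ha : a ∈ V) (hc : c ∈ V) (haj : a j < p j)
    (hcj : p j < c j) {v : Fin n → ℝ} (hv : v ∈ V) : ψ v j = v j := by
  obtain ⟨m, b, -, hmb⟩ := hψ.2.2.2 j
  obtain ⟨rfl, rfl⟩ := affine_eq_id_of_fixed_of_le haj hcj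
    (by rw [← hmb p hpV, hfix]) (hmb a ha ▸ hψ.2.1 a ha j) (hmb c hc ▸ hψ.2.1 c hc j)
  rw [hmb v hv]
  ring

theorem exists_update_mem (hψ : ValidRemap V R ψ) (hpV : p ∈ V)
    (hp : ¬ ∃ r ∈ R, StrictPareto p r) {i : Fin n}
    (hbetween : ∀ j ≠ i, ∃ a ∈ V, ∃ c ∈ V, a j < p j ∧ p j < c j)
    {v : Fin n → ℝ} (hv : v ∈ V) (hvi : v i ≠ p i) :
    ∃ ε : ℝ, 0 < ε ∧ update v i (v i + ε) ∈ R := by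
  have hfix := hψ.apply_eq_self hpV hp
  have hid : ∀ j ≠ i, ∀ v ∈ V, ψ v j = v j := fun j hj v hv => by
    obtain ⟨a, ha, c, hc, haj, hcj⟩ := hbetween j hj
    exact hψ.apply_eq_of_lt_of_lt hpV hfix ha hc haj hcj hv
  obtain ⟨m, b, -, hmb⟩ := hψ.2.2.2 i
  have hgain : ∀ v ∈ V, ψ v i - v i = (m - 1) * (v i - p i) := fun v hv => by
    have hp := hmb p hpV
    rw [hfix] at hp
    rw [hmb v hv]
    linarith
  have hm : m - 1 ≠ 0 := by
    obtain ⟨v₀, hv₀, -, k, hk⟩ := hψ.2.2.1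
    obtain rfl : k = i := by
      by_contra hki
      exact hk.ne (hid k hki v₀ hv₀).symm
    intro h
    linarith [hgain v₀ hv₀, h ▸ zero_mul (v₀ k - p k)]
  refine ⟨ψ v i - v i, (sub_nonneg.2 (hψ.2.1 v hv i)).lt_of_ne' ?_, ?_⟩
  · rw [hgain v hv]
    exact mul_ne_zero hm (sub_ne_zero.2 hvi)
  · rw [add_sub_cancel, ← eq_update_iff.2 ⟨rfl, fun j hj => hid j hj v hv⟩]
    exact hψ.1 v hv

end ValidRemap

theorem validRemap_update_add_mul {V R : Set (Fin n → ℝ)} {i : Fin n} {p : Fin n → ℝ}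
    {t : ℝ} (ht : 0 < 1 + t) (hnonneg : ∀ v ∈ V, 0 ≤ t * (v i - p i))
    (hpos : ∃ w ∈ V, t * (w i - p i) ≠ 0)
    (hR : ∀ v ∈ V, update v i (v i + t * (v i - p i)) ∈ R) :
    ValidRemap V R (fun v => update v i (v i + t * (v i - p i))) := by
  refine ⟨hR, fun v hv => pareto_update_add (hnonneg v hv), ?_, fun k => ?_⟩
  · obtain ⟨w, hw, hne⟩ := hpos
    refine ⟨w, hw, pareto_update_add (hnonneg w hw), i, ?_⟩
    simpa using (hnonneg w hw).lt_of_ne' hne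
  · rcases eq_or_ne k i with rfl | hk
    · exact ⟨1 + t, -(t * p k), ht, fun v _ => by simp only [update_self]; ring⟩
    · exact ⟨1, 0, one_pos, fun v _ => by simp [hk]⟩

theorem exists_validRemap_of_convex {V R : Set (Fin n → ℝ)} (hVR : V ⊆ R) (hR : Convex ℝ R)
    (hV : V.Finite) {i : Fin n} {p : Fin n → ℝ} {σ : ℝ} (hσ : σ ≠ 0)
    (hsign : ∀ v ∈ V, 0 ≤ σ * (v i - p i)) (hw : ∃ w ∈ V, w i ≠ p i)
    (hcond : ∀ v ∈ V, v i ≠ p i → ∃ ε : ℝ, 0 < ε ∧ update v i (v i + ε) ∈ R) :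
    ∃ ψ, ValidRemap V R ψ := by
  choose! ε hε hεR using hcond
  have hsmall : ∀ᶠ c in 𝓝 (0 : ℝ),
      0 < 1 + c * σ ∧ ∀ v ∈ V, v i ≠ p i → c * σ * (v i - p i) ≤ ε v := by
    refine ((Continuous.tendsto' (by fun_prop) 0 1 (by simp)).eventually_const_lt one_pos).and
      ((eventually_all_finite hV).2 fun v hv => ?_)
    by_cases hvi : v i = p i
    · exact Eventually.of_forall fun _ h => absurd hvi h
    · filter_upwards [(Continuous.tendsto' (f := fun c : ℝ => c * σ * (v i - p i))
        (by fun_prop) 0 0 (by simp)).eventually_le_const (hε v hv hvi)] with c hc _ using hc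
  obtain ⟨c, ⟨hc1, hcε⟩, hc⟩ :=
    ((hsmall.filter_mono nhdsWithin_le_nhds).and (self_mem_nhdsWithin (s := Ioi 0))).exists
  have hnonneg : ∀ v ∈ V, 0 ≤ c * σ * (v i - p i) := fun v hv => by
    rw [mul_assoc]
    exact mul_nonneg (le_of_lt hc) (hsign v hv)
  refine ⟨_, validRemap_update_add_mul hc1 hnonneg ?_ fun v hv => ?_⟩
  · obtain ⟨w, hw, hne⟩ := hw
    exact ⟨w, hw, mul_ne_zero (mul_ne_zero (ne_of_gt hc) hσ) (sub_ne_zero.2 hne)⟩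
  · by_cases hvi : v i = p i
    · have hzero : c * σ * (v i - p i) = 0 := by rw [hvi, sub_self, mul_zero]
      rw [hzero, add_zero, update_eq_self]
      exact hVR hv
    · exact hR.update_add_mem (hVR hv) (hεR v hv hvi) ⟨hnonneg v hv, hcε v hv hvi⟩

theorem correlated_token_spi_case_one_extremal_general (G Gb : Game 2)
    (hred : Game.IsReduction G Gb)
    (vstar vmin vmax : Fin 2 → ℝ)
    (hmin : ∀ i, IsLeast ((fun v => v i) '' Vset G Gb) (vmin i))
    (hmax : ∀ i, IsGreatest ((fun v => v i) '' Vset G Gb) (vmax i))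
    (hstar : VstarSet G Gb = {vstar})
    (i : Fin 2)
    (hi : vstar i = vmin i ∨ vstar i = vmax i)
    (hother : ∀ j, j ≠ i → ¬(vstar j = vmin j ∨ vstar j = vmax j)) :
    (∃ ψ : (Fin 2 → ℝ) → Fin 2 → ℝ, ValidRemap (Vset G Gb) (Rset G) ψ) ↔
      (∀ v ∈ Vset G Gb, v i ≠ vstar i →
        ∃ ε : ℝ, 0 < ε ∧ Function.update v i (v i + ε) ∈ Rset G) := by
  obtain ⟨hvstar, hunimp⟩ : vstar ∈ VstarSet G Gb := hstar ▸ rfl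
  have hVR := Vset_subset_Rset hred
  have hbetween :
      ∀ j ≠ i, ∃ a ∈ Vset G Gb, ∃ c ∈ Vset G Gb, a j < vstar j ∧ vstar j < c j := by
    intro j hj
    obtain ⟨hjmin, hjmax⟩ := not_or.1 (hother j hj)
    obtain ⟨a, ha, haj⟩ := (hmin j).exists_lt_of_mem_image hvstar hjmin
    obtain ⟨c, hc, hcj⟩ := (hmax j).exists_gt_of_mem_image hvstar hjmax
    exact ⟨a, ha, c, hc, haj, hcj⟩
  refine ⟨fun ⟨ψ, hψ⟩ v hv => hψ.exists_update_mem hvstar hunimp hbetween hv, fun hcond => ?_⟩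
  obtain ⟨j, hj⟩ := exists_ne i
  obtain ⟨-, -, c, hc, -, hcj⟩ := hbetween j hj
  have hw : ∃ w ∈ Vset G Gb, w i ≠ vstar i :=
    ⟨c, hc, (lt_of_not_strictPareto hunimp (hVR hc) hj hcj).ne⟩
  obtain ⟨σ, hσ, hsign⟩ : ∃ σ : ℝ, σ ≠ 0 ∧ ∀ v ∈ Vset G Gb, 0 ≤ σ * (v i - vstar i) := by
    rcases hi with hi | hi
    · exact ⟨1, one_ne_zero, fun v hv => by simpa [hi] using (hmin i).2 (mem_image_of_mem _ hv)⟩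
    · exact ⟨-1, by norm_num, fun v hv => by simpa [hi] using (hmax i).2 (mem_image_of_mem _ hv)⟩
  exact exists_validRemap_of_convex hVR (convex_convexHull ℝ _) (Vset_finite G Gb) hσ hsign hw
    hcond

/-- Case 2(b) of Theorem 4 of the paper: if `V* = {v*}` and `v*` is extremal
for exactly one player `i`, then a valid utility remapping function `ψ : V → R` exists iff
every `v ∈ V` with `v i ≠ v* i` can be moved some positive amount `ε` in direction `i` while
staying in `R`. -/
theorem correlated_token_spi_case_one_extremal (G Gb : Game 2)
    (hred : Game.IsReduction G Gb)
    (hV : (Vset G Gb).Nontrivial)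
    (vstar vmin vmax : Fin 2 → ℝ)
    (hmin : ∀ i, IsLeast ((fun v => v i) '' Vset G Gb) (vmin i))
    (hmax : ∀ i, IsGreatest ((fun v => v i) '' Vset G Gb) (vmax i))
    (hstar : VstarSet G Gb = {vstar})
    (i : Fin 2)
    (hi : vstar i = vmin i ∨ vstar i = vmax i)
    (hother : ∀ j, j ≠ i → ¬(vstar j = vmin j ∨ vstar j = vmax j)) :
    (∃ ψ : (Fin 2 → ℝ) → Fin 2 → ℝ, ValidRemap (Vset G Gb) (Rset G) ψ) ↔
      (∀ v ∈ Vset G Gb, v i ≠ vstar i →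
        ∃ ε : ℝ, 0 < ε ∧ Function.update v i (v i + ε) ∈ Rset G) :=
  correlated_token_spi_case_one_extremal_general G Gb hred vstar vmin vmax hmin hmax hstar i hi
    hother

end SPIs
end

section
/- Let G = (A, u) be a game with reduced outcome set Ā, and let F ⊆ Δ(A) be a set of correlated strategy profiles with Ā ⊆ F (identifying outcomes with their point-mass distributions). Then there exists a map Ψ : Ā → F with u(Ψ(a)) ⪰ u(a) for all a ∈ Ā and u(Ψ(a)) ≻ u(a) for some a ∈ Ā (an omnilateral default-remapping SPI into F) if and only if some outcome of the reduced game is Pareto sub-optimal in F, i.e., there exist a ∈ Ā and f ∈ F with u(f) ≻ u(a). In particular this holds with F = A (pure default-remapping) and with F = Δ(A) (correlated default-remapping). -/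
namespace SPIs

namespace Game

variable {n : ℕ}

lemma mem_outcomes {G : Game n} {a : Fin n → ℕ} : a ∈ G.outcomes ↔ G.mem a :=
  Fintype.mem_piFinset

lemma RemoveStep.mem {G G' : Game n} (h : RemoveStep G G') {a : Fin n → ℕ} (ha : G'.mem a) :
    G.mem a := by
  obtain ⟨i, x, -, hact, -⟩ := h
  intro j
  have haj := ha j
  rw [hact] at haj
  rcases eq_or_ne j i with rfl | hji
  · exact Finset.mem_of_mem_erase (by simpa using haj)
  · rwa [Function.update_of_ne hji] at haj

lemma mem_of_reflTransGen_removeStep_s15 {G H : Game n} (h : Relation.ReflTransGen RemoveStep G H)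
    {a : Fin n → ℕ} (ha : H.mem a) : G.mem a := by
  induction h with
  | refl => exact ha
  | tail _ step ih => exact ih (step.mem ha)

lemma IsReduction.mem {G H : Game n} (h : IsReduction G H) {a : Fin n → ℕ} (ha : H.mem a) :
    G.mem a :=
  mem_of_reflTransGen_removeStep_s15 h.1 ha

end Game

lemma Pareto.refl {n : ℕ} (x : Fin n → ℝ) : Pareto x x := fun _ => le_rfl

lemma expU_pointMass {n : ℕ} (G : Game n) {a : Fin n → ℕ} (ha : G.mem a) :
    expU G (pointMass a) = G.u a := by
  funext i
  simp [expU, pointMass, ite_mul, Game.mem_outcomes.2 ha]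

theorem omnilateral_default_remapping_spi_iff_general {n : ℕ} (G Gb : Game n)
    (hred : Game.IsReduction G Gb)
    (F : Set ((Fin n → ℕ) → ℝ))
    (hAF : ∀ a, Gb.mem a → pointMass a ∈ F) :
    (∃ Ψ : (Fin n → ℕ) → ((Fin n → ℕ) → ℝ),
        (∀ a, Gb.mem a → Ψ a ∈ F) ∧
        (∀ a, Gb.mem a → Pareto (G.u a) (expU G (Ψ a))) ∧
        (∃ a, Gb.mem a ∧ StrictPareto (G.u a) (expU G (Ψ a)))) ↔
      (∃ a, Gb.mem a ∧ ∃ f ∈ F, StrictPareto (G.u a) (expU G f)) := by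
  constructor
  · rintro ⟨Ψ, hΨF, -, a, ha, hstrict⟩
    exact ⟨a, ha, Ψ a, hΨF a ha, hstrict⟩
  · rintro ⟨a₀, ha₀, f₀, hf₀, hstrict⟩
    refine ⟨Function.update pointMass a₀ f₀, fun a ha => ?_, fun a ha => ?_,
      ⟨a₀, ha₀, by simpa using hstrict⟩⟩
    · rcases eq_or_ne a a₀ with rfl | hne
      · simpa using hf₀
      · simpa [Function.update_of_ne hne] using hAF a ha
    · rcases eq_or_ne a a₀ with rfl | hne
      · simpa using hstrict.1
      · rw [Function.update_of_ne hne, expU_pointMass G (hred.mem ha)]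
        exact Pareto.refl _

/-- an omnilateral default-remapping SPI of `G` into a feasible set
`F ⊆ Δ(A)` (with `Ā ⊆ F` via point masses) exists iff some outcome of the reduced game is
Pareto sub-optimal in `F`. In particular this applies with `F = A` (pure default-remapping)
and `F = Δ(A)` (correlated default-remapping). -/
theorem omnilateral_default_remapping_spi_iff {n : ℕ} (G Gb : Game n)
    (hred : Game.IsReduction G Gb)
    (F : Set ((Fin n → ℕ) → ℝ)) (hF : ∀ p ∈ F, IsDistOn G p)
    (hAF : ∀ a, Gb.mem a → pointMass a ∈ F) :
    (∃ Ψ : (Fin n → ℕ) → ((Fin n → ℕ) → ℝ),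
        (∀ a, Gb.mem a → Ψ a ∈ F) ∧
        (∀ a, Gb.mem a → Pareto (G.u a) (expU G (Ψ a))) ∧
        (∃ a, Gb.mem a ∧ StrictPareto (G.u a) (expU G (Ψ a)))) ↔
      (∃ a, Gb.mem a ∧ ∃ f ∈ F, StrictPareto (G.u a) (expU G f)) :=
  omnilateral_default_remapping_spi_iff_general G Gb hred F hAF

end SPIs
end
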